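/- arXiv:1303.3174 — 9 statements merged into one kernel-verified Lean document; each statement's English description precedes it below -/
import Mathlib

section
/- Given a group extension 1 → N → G → Q → 1 and a G-module M, the sequence 0 → H¹(Q, M^N) → H¹(G, M) → H¹(N, M)^Q, with the maps inflation and restriction, is exact: inflation is injective and the kernel of restriction equals the image of inflation. -/
/-- Exactness of `0 → H¹(Q, Mᴺ) → H¹(G, M) → H¹(N, M)^Q` for a group extension
`1 → N → G →^π Q → 1` (with `N = ker π`) and a `G`-module `M`.  First conjunct:
inflation is injective (a `Q`-cocycle with invariant values, encoded via lifts along `π`,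
whose inflation is a `G`-coboundary is itself a coboundary of an `N`-invariant element).
Second conjunct: for a 1-cocycle `f : G → M`, its restriction to `N` is a coboundary
(i.e. its class is in the kernel of restriction) iff `f` is, up to a `G`-coboundary, the
inflation of a `Q`-cocycle with values in `Mᴺ` (i.e. its class is in the image of
inflation). -/
theorem low_degree_exactness_H1 {G Q M : Type*} [Group G] [Group Q] [AddCommGroup M]
    [DistribMulAction G M] (π : G →* Q) (hπ : Function.Surjective π) :
    (∀ f : Q → M,
      (∀ q : Q, ∀ n ∈ π.ker, n • f q = f q) →
      (∀ x y : G, f (π x * π y) = f (π x) + x • f (π y)) →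
      (∃ m : M, ∀ x : G, f (π x) = x • m - m) →
      ∃ m : M, (∀ n ∈ π.ker, n • m = m) ∧ ∀ x : G, f (π x) = x • m - m)
    ∧
    (∀ f : G → M, (∀ x y : G, f (x * y) = f x + x • f y) →
      ((∃ m : M, ∀ n ∈ π.ker, f n = n • m - m) ↔
       ∃ g : Q → M,
         (∀ q : Q, ∀ n ∈ π.ker, n • g q = g q) ∧
         (∀ x y : G, g (π x * π y) = g (π x) + x • g (π y)) ∧
         ∃ m : M, ∀ x : G, f x - g (π x) = x • m - m)) := by

  constructor
  · intro f hinv hcoc ⟨m, hm⟩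
    refine ⟨m, ?_, hm⟩
    intro n hn
    have h1 : f (π 1 * π 1) = f (π 1) + (1 : G) • f (π 1) := hcoc 1 1
    simp only [map_one, one_mul, one_smul] at h1
    have hf1 : f 1 = 0 := by
      have := left_eq_add.mp h1
      exact this
    have hmn := hm n
    rw [MonoidHom.mem_ker.mp hn, hf1] at hmn
    have : n • m - m = 0 := hmn.symm
    rw [sub_eq_zero] at this
    exact this
  · intro f hf
    constructor
    · rintro ⟨m, hm⟩
      obtain ⟨s, hs⟩ := hπ.hasRightInverse
      set f' : G → M := fun x => f x - (x • m - m) with hf'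
      have hker : ∀ n ∈ π.ker, f' n = 0 := fun n hn => by
        simp [hf', hm n hn]
      have hcoc' : ∀ x y : G, f' (x * y) = f' x + x • f' y := by
        intro x y
        simp only [hf', hf x y, mul_smul, smul_sub]
        abel
      have hconst : ∀ x y : G, π x = π y → f' x = f' y := by
        intro x y h
        have hx : x⁻¹ * y ∈ π.ker := by
          simp [MonoidHom.mem_ker, h]
        have h2 := hcoc' x (x⁻¹ * y)
        rw [mul_inv_cancel_left, hker _ hx, smul_zero, add_zero] at h2
        exact h2.symm
      refine ⟨fun q => f' (s q), ?_, ?_, m, ?_⟩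
      · intro q n hn
        have h1 : f' (n * s q) = f' n + n • f' (s q) := hcoc' n (s q)
        rw [hker n hn, zero_add] at h1
        have h2 : f' (n * s q) = f' (s q) := hconst _ _ (by
          simp [MonoidHom.mem_ker.mp hn, hs q])
        rw [h2] at h1
        exact h1.symm
      · intro x y
        have h1 : f' (s (π x * π y)) = f' (x * y) := hconst _ _ (by simp [hs _])
        have h2 : f' (s (π x)) = f' x := hconst _ _ (hs _)
        have h3 : f' (s (π y)) = f' y := hconst _ _ (hs _)
        simp only [h1, h2, h3, hcoc']
      · intro x
        have h2 : f' (s (π x)) = f' x := hconst _ _ (hs _)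
        show f x - f' (s (π x)) = x • m - m
        rw [h2]
        simp [hf']
    · rintro ⟨g, hginv, hgcoc, m, hm⟩
      refine ⟨m, fun n hn => ?_⟩
      have hg1 : g 1 = 0 := by
        have h1 := hgcoc 1 1
        simp only [map_one, one_mul, one_smul] at h1
        exact left_eq_add.mp h1
      have hmn := hm n
      rw [MonoidHom.mem_ker.mp hn, hg1, sub_zero] at hmn
      exact hmn
end

section
/- Let 1 → N → G →^π Q → 1 be a group extension and M a G-module. Let 0 → M → E_M → ℤ → 0 be an extension of N-modules, and fix an N-module map ν : ℤG → E_M lifting the identity of ℤ (i.e. p_M ∘ ν = ε), with restriction μ : IG → M. For q ∈ Q choose x ∈ G with π(x) = q and set d(q) = α_x ∘ μ ∘ α_x⁻¹ − μ ∈ Hom_N(IG, M), where α_x denotes the action of x on IG and on M. Then d(q) does not depend on the choice of x with π(x) = q. -/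
/-! Writing `μ` for the restriction of `ν` to `IG`, the correction term `α_x μ α_{x⁻¹} - μ` is
unchanged when `x` is replaced by `y = x n` with `n ∈ N`: since `ν` and the inclusion `M → E` are
`N`-equivariant and the inclusion is injective, `μ` is `N`-equivariant, so
`y μ (y⁻¹ a) = x n μ (n⁻¹ x⁻¹ a) = x μ (x⁻¹ a)`. -/

/-- The augmentation map `ε : ℤG → ℤ`. -/
noncomputable def aug (G : Type*) [Group G] : MonoidAlgebra ℤ G →ₐ[ℤ] ℤ :=
  MonoidAlgebra.lift ℤ ℤ G 1

/-- The augmentation ideal `IG = ker ε`. -/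
noncomputable def augIdeal (G : Type*) [Group G] : Ideal (MonoidAlgebra ℤ G) :=
  RingHom.ker (aug G).toRingHom

open MonoidAlgebra

section

variable {G M : Type*} [Group G] [AddCommGroup M] [DistribMulAction G M]

theorem augIdeal_restriction_map_of_smul {E : Type*} (i : M → E) (hi : Function.Injective i)
    (ρ : G → E → E) (ν : MonoidAlgebra ℤ G → E) (μ : augIdeal G → M)
    (hμ : ∀ a : augIdeal G, i (μ a) = ν a) {n : G} (hρ_i : ∀ m : M, ρ n (i m) = i (n • m))
    (hν : ∀ a : MonoidAlgebra ℤ G, ν (of ℤ G n * a) = ρ n (ν a)) (a : augIdeal G) :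
    μ (of ℤ G n • a) = n • μ a :=
  hi <| by rw [hμ, Submodule.coe_smul, smul_eq_mul, hν, ← hμ, hρ_i]

theorem smul_map_of_inv_smul_eq_of_map_of_smul (μ : augIdeal G → M) {x y : G}
    (hμ : ∀ a : augIdeal G, μ (of ℤ G (x⁻¹ * y) • a) = (x⁻¹ * y) • μ a) (a : augIdeal G) :
    x • μ (of ℤ G x⁻¹ • a) = y • μ (of ℤ G y⁻¹ • a) :=
  calc x • μ (of ℤ G x⁻¹ • a) = x • μ (of ℤ G (x⁻¹ * y) • of ℤ G y⁻¹ • a) := by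
        rw [smul_smul, ← map_mul, mul_inv_cancel_right]
    _ = y • μ (of ℤ G y⁻¹ • a) := by rw [hμ, smul_smul, mul_inv_cancel_left]

end

theorem d_two_well_defined_general {G Q M E : Type*} [Group G] [Group Q] [AddCommGroup M]
    [DistribMulAction G M] [AddCommGroup E]
    (π : G →* Q)
    (i : M →+ E)
    (hi : Function.Injective i)
    (ρ : G → E → E)
    (hρ_i : ∀ n ∈ π.ker, ∀ m : M, ρ n (i m) = i (n • m))
    (ν : MonoidAlgebra ℤ G →+ E)
    (hν_equiv : ∀ n ∈ π.ker, ∀ a : MonoidAlgebra ℤ G,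
      ν (MonoidAlgebra.of ℤ G n * a) = ρ n (ν a))
    (μ : augIdeal G → M)
    (hμ : ∀ a : augIdeal G, i (μ a) = ν ↑a) :
    ∀ x y : G, π x = π y →
      ∀ a : augIdeal G,
        x • μ ⟨MonoidAlgebra.of ℤ G x⁻¹ * ↑a, (augIdeal G).mul_mem_left (MonoidAlgebra.of ℤ G x⁻¹) a.2⟩ - μ a
          = y • μ ⟨MonoidAlgebra.of ℤ G y⁻¹ * ↑a, (augIdeal G).mul_mem_left (MonoidAlgebra.of ℤ G y⁻¹) a.2⟩ - μ a := by
  intro x y hxy a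
  have hn : x⁻¹ * y ∈ π.ker := by simp [MonoidHom.mem_ker, hxy]
  rw [sub_left_inj]
  exact smul_map_of_inv_smul_eq_of_map_of_smul μ
    (augIdeal_restriction_map_of_smul i hi ρ ν μ hμ (hρ_i _ hn) (hν_equiv _ hn)) a

/-- Let `1 → N → G →^π Q → 1` be a group extension (`N = ker π`) and `M` a `G`-module.
Let `0 → M →ᶦ E →ᵖ ℤ → 0` be an extension of `N`-modules (the `N`-action on `E` is given
by `ρ`, compatible with `i`, `p` and the `N`-action on `M`), and fix an `N`-equivariant
additive lift `ν : ℤG → E` of the identity of `ℤ` (`p ∘ ν = ε`), with restriction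
`μ : IG → M` (i.e. `i ∘ μ = ν` on `IG`).  For `q ∈ Q` choose `x ∈ G` with `π x = q` and
set `d(q) = α_x ∘ μ ∘ α_{x⁻¹} - μ` where `α_x` is the action of `x` on `IG`
(left multiplication) and on `M`.  Then `d(q)` does not depend on the choice of `x`. -/
theorem d_two_well_defined {G Q M E : Type*} [Group G] [Group Q] [AddCommGroup M]
    [DistribMulAction G M] [AddCommGroup E]
    (π : G →* Q) (hπ : Function.Surjective π)
    (i : M →+ E) (p : E →+ ℤ)
    (hi : Function.Injective i) (hp : Function.Surjective p)
    (hex : ∀ e : E, p e = 0 ↔ ∃ m : M, i m = e)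
    (ρ : G → E → E)
    (hρ_add : ∀ n ∈ π.ker, ∀ e e' : E, ρ n (e + e') = ρ n e + ρ n e')
    (hρ_mul : ∀ n ∈ π.ker, ∀ n' ∈ π.ker, ∀ e : E, ρ (n * n') e = ρ n (ρ n' e))
    (hρ_one : ∀ e : E, ρ 1 e = e)
    (hρ_i : ∀ n ∈ π.ker, ∀ m : M, ρ n (i m) = i (n • m))
    (hρ_p : ∀ n ∈ π.ker, ∀ e : E, p (ρ n e) = p e)
    (ν : MonoidAlgebra ℤ G →+ E)
    (hν_equiv : ∀ n ∈ π.ker, ∀ a : MonoidAlgebra ℤ G,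
      ν (MonoidAlgebra.of ℤ G n * a) = ρ n (ν a))
    (hν_lift : ∀ a : MonoidAlgebra ℤ G, p (ν a) = aug G a)
    (μ : augIdeal G → M)
    (hμ : ∀ a : augIdeal G, i (μ a) = ν ↑a) :
    ∀ x y : G, π x = π y →
      ∀ a : augIdeal G,
        x • μ ⟨MonoidAlgebra.of ℤ G x⁻¹ * ↑a, (augIdeal G).mul_mem_left (MonoidAlgebra.of ℤ G x⁻¹) a.2⟩ - μ a
          = y • μ ⟨MonoidAlgebra.of ℤ G y⁻¹ * ↑a, (augIdeal G).mul_mem_left (MonoidAlgebra.of ℤ G y⁻¹) a.2⟩ - μ a :=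
  d_two_well_defined_general π i hi ρ hρ_i ν hν_equiv μ hμ
end

section
/- Let 1 → N → G → Q → 1 be a group extension, M a G-module, and let e_M : 0 → M → E_M → ℤ → 0 be an extension of N-modules. Define Aut(e_M)-bar to be the group of pairs (α, x) where x ∈ G and α is an automorphism of the abelian group E_M commuting with the projection to ℤ (i.e. p_M ∘ α = p_M) whose restriction to M equals the action of x on M. Then the assignments m ↦ (α_m, e) (where α_m(y) = y + p_M(y)m) and (α, x) ↦ x fit into a short exact sequence of groups 0 → M → Aut(e_M)-bar → G, and the image of Aut(e_M)-bar → G contains every x ∈ G for which the x-twisted extension x·e_M is equivalent to e_M; in particular, if the class [e_M] ∈ Ext¹_N(ℤ, M) is Q-invariant, then Aut(e_M)-bar → G is surjective and 0 → M → Aut(e_M)-bar → G → 1 is a group extension. -/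
/-- `Abar i p α x` says that the pair `(α, x)` belongs to the group `Aut(e_M)-bar`:
`α` is an automorphism of the abelian group `E` commuting with the projection
`p : E → ℤ` whose restriction to `M` (embedded via `i`) is the action of `x ∈ G`. -/
def Abar {M E G : Type*} [AddCommGroup M] [AddCommGroup E] [Group G]
    [DistribMulAction G M] (i : M →+ E) (p : E →+ ℤ) (α : E → E) (x : G) : Prop :=
  Function.Bijective α ∧ (∀ y z : E, α (y + z) = α y + α z) ∧
  (∀ e : E, p (α e) = p e) ∧ ∀ m : M, α (i m) = i (x • m)

/-- `TwistEquiv π ρ i p x` says that the `x`-twisted extension `x • e_M` is equivalent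
to `e_M` as an extension of `N`-modules (`N = ker π`, acting on `E` via `ρ`): there is an
additive automorphism `β` of `E` over `ℤ` restricting on `M` to the `x`-action and
intertwining the `(x⁻¹ n x)`-action with the `n`-action for all `n ∈ N`.  The class
`[e_M] ∈ Ext¹_N(ℤ, M)` is `Q`-invariant precisely when this holds for all `x ∈ G`. -/
def TwistEquiv {M E G Q : Type*} [AddCommGroup M] [AddCommGroup E] [Group G] [Group Q]
    [DistribMulAction G M] (π : G →* Q) (ρ : G → E → E)
    (i : M →+ E) (p : E →+ ℤ) (x : G) : Prop :=
  ∃ β : E → E, Function.Bijective β ∧ (∀ y z : E, β (y + z) = β y + β z) ∧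
    (∀ e : E, p (β e) = p e) ∧ (∀ m : M, β (i m) = i (x • m)) ∧
    ∀ n ∈ π.ker, ∀ e : E, β (ρ (x⁻¹ * n * x) e) = ρ n (β e)

/-- Let `1 → N → G →^π Q → 1` be a group extension, `M` a `G`-module, and
`e_M : 0 → M →ⁱ E →ᵖ ℤ → 0` an extension of `N`-modules (`N`-action `ρ` on `E`).
The assignments `m ↦ (α_m, 1)` (with `α_m y = y + p y • i m`) and `(α, x) ↦ x` fit
into a short exact sequence `0 → M → Aut(e_M)-bar → G`: each `(α_m, 1)` lies in the
group, `m ↦ α_m` is injective, the elements over `1 ∈ G` are exactly the `α_m`, and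
the group is closed under composition.  The image of the projection to `G` contains
every `x` for which the twisted extension `x • e_M` is equivalent to `e_M`; in
particular, if the class `[e_M]` is `Q`-invariant, the projection is surjective, so
`0 → M → Aut(e_M)-bar → G → 1` is a group extension. -/
theorem abar_extension {G Q M E : Type*} [Group G] [Group Q] [AddCommGroup M]
    [DistribMulAction G M] [AddCommGroup E]
    (π : G →* Q) (hπ : Function.Surjective π)
    (i : M →+ E) (p : E →+ ℤ)
    (hi : Function.Injective i) (hp : Function.Surjective p)
    (hex : ∀ e : E, p e = 0 ↔ ∃ m : M, i m = e)
    (ρ : G → E → E)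
    (hρ_add : ∀ n ∈ π.ker, ∀ e e' : E, ρ n (e + e') = ρ n e + ρ n e')
    (hρ_mul : ∀ n ∈ π.ker, ∀ n' ∈ π.ker, ∀ e : E, ρ (n * n') e = ρ n (ρ n' e))
    (hρ_one : ∀ e : E, ρ 1 e = e)
    (hρ_i : ∀ n ∈ π.ker, ∀ m : M, ρ n (i m) = i (n • m))
    (hρ_p : ∀ n ∈ π.ker, ∀ e : E, p (ρ n e) = p e) :
    (∀ m : M, Abar i p (fun y : E => y + p y • i m) (1 : G))
    ∧ Function.Injective (fun m : M => fun y : E => y + p y • i m)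
    ∧ (∀ α : E → E, Abar i p α (1 : G) → ∃ m : M, α = fun y : E => y + p y • i m)
    ∧ (∀ (α α' : E → E) (x x' : G),
        Abar i p α x → Abar i p α' x' → Abar i p (α ∘ α') (x * x'))
    ∧ (∀ x : G, TwistEquiv π ρ i p x → ∃ α : E → E, Abar i p α x)
    ∧ ((∀ x : G, TwistEquiv π ρ i p x) → ∀ x : G, ∃ α : E → E, Abar i p α x) := by

  have hpi : ∀ m : M, p (i m) = 0 := fun m => (hex (i m)).2 ⟨m, rfl⟩
  have key : ∀ m : M, Abar i p (fun y : E => y + p y • i m) (1 : G) := by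
    intro m
    refine ⟨?_, ?_, ?_, ?_⟩
    · refine Function.bijective_iff_has_inverse.2 ⟨fun y => y - p y • i m, fun y => ?_, fun y => ?_⟩
      · simp [map_zsmul, hpi m]
      · simp [map_zsmul, hpi m]
    · intro y z; simp [add_smul]; abel
    · intro e; simp [map_zsmul, hpi m]
    · intro m'; simp [hpi m']
  refine ⟨key, ?_, ?_, ?_, ?_, ?_⟩
  · intro m m' h
    obtain ⟨e₁, he₁⟩ := hp 1
    have := congrFun h e₁
    simp only [he₁, one_smul] at this
    exact hi (by linear_combination (norm := abel) this)
  · rintro α ⟨hb, hadd, hpα, hres⟩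
    obtain ⟨e₁, he₁⟩ := hp 1
    obtain ⟨m, hm⟩ := (hex (α e₁ - e₁)).1 (by simp [hpα])
    refine ⟨m, funext fun y => ?_⟩
    set γ : E →+ E := AddMonoidHom.mk' (fun y => α y - (y + p y • i m)) (by
      intro y z
      simp only [hadd, map_add, add_smul]
      abel) with hγ
    have hγ0 : ∀ y, γ y = 0 := by
      intro y
      obtain ⟨m', hm'⟩ := (hex (y - p y • e₁)).1 (by simp [map_zsmul, he₁])
      have hy : y = i m' + p y • e₁ := by rw [hm']; abel
      have h1 : γ (i m') = 0 := by
        simp [hγ, AddMonoidHom.mk'_apply, hres m', hpi m']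
      have h2 : γ e₁ = 0 := by
        simp only [hγ, AddMonoidHom.mk'_apply, he₁, one_smul, hm]
        abel
      rw [hy, map_add, map_zsmul, h1, h2, smul_zero, add_zero]
    have := hγ0 y
    simp only [hγ, AddMonoidHom.mk'_apply, sub_eq_zero] at this
    exact this
  · rintro α α' x x' ⟨hb, hadd, hpα, hres⟩ ⟨hb', hadd', hpα', hres'⟩
    refine ⟨hb.comp hb', fun y z => by simp [Function.comp, hadd', hadd], fun e => by
      simp [Function.comp, hpα, hpα'], fun m => by
      simp [Function.comp, hres' m, hres, mul_smul]⟩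
  · rintro x ⟨β, hb, hadd, hpβ, hres, -⟩
    exact ⟨β, hb, hadd, hpβ, hres⟩
  · intro h x
    obtain ⟨β, hb, hadd, hpβ, hres, -⟩ := h x
    exact ⟨β, hb, hadd, hpβ, hres⟩
end

section
/- Let Aut(e_M) denote the normalizer of s(N) in Aut(e_M)-bar, i.e. the set of pairs (α, x) ∈ Aut(e_M)-bar with α α_n α⁻¹ = α_{xnx⁻¹} for all n ∈ N. If the class [e_M] ∈ Ext¹_N(ℤ, M) is Q-invariant, then the projection Aut(e_M) → G is still surjective, and its kernel is exactly the set of (α_m, e) with m ∈ M^N, so that 0 → M^N → Aut(e_M) → G → 1 is a group extension. -/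
/-- `AutP π ρ i p α x` says that `(α, x)` lies in the normalizer `Aut(e_M)` of
`s(N) = {(ρ n, n) : n ∈ N}` in `Aut(e_M)-bar`, i.e. `(α, x) ∈ Aut(e_M)-bar` and
`α ∘ ρ n ∘ α⁻¹ = ρ (x n x⁻¹)` for every `n ∈ N = ker π`. -/
def AutP {M E G Q : Type*} [AddCommGroup M] [AddCommGroup E] [Group G] [Group Q]
    [DistribMulAction G M] (π : G →* Q) (ρ : G → E → E)
    (i : M →+ E) (p : E →+ ℤ) (α : E → E) (x : G) : Prop :=
  Abar i p α x ∧ ∀ n ∈ π.ker, ∀ e : E, α (ρ n e) = ρ (x * n * x⁻¹) (α e)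

/-- Let `Aut(e_M)` be the normalizer of `s(N)` in `Aut(e_M)-bar`.  If the class
`[e_M] ∈ Ext¹_N(ℤ, M)` is `Q`-invariant (every twisted extension `x • e_M` is
equivalent to `e_M`), then the projection `Aut(e_M) → G` is surjective, and its kernel
is exactly the set of `(α_m, 1)` with `m ∈ Mᴺ` (`α_m y = y + p y • i m`), so that
`0 → Mᴺ → Aut(e_M) → G → 1` is a group extension. -/
theorem autP_extension {G Q M E : Type*} [Group G] [Group Q] [AddCommGroup M]
    [DistribMulAction G M] [AddCommGroup E]
    (π : G →* Q) (hπ : Function.Surjective π)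
    (i : M →+ E) (p : E →+ ℤ)
    (hi : Function.Injective i) (hp : Function.Surjective p)
    (hex : ∀ e : E, p e = 0 ↔ ∃ m : M, i m = e)
    (ρ : G → E → E)
    (hρ_add : ∀ n ∈ π.ker, ∀ e e' : E, ρ n (e + e') = ρ n e + ρ n e')
    (hρ_mul : ∀ n ∈ π.ker, ∀ n' ∈ π.ker, ∀ e : E, ρ (n * n') e = ρ n (ρ n' e))
    (hρ_one : ∀ e : E, ρ 1 e = e)
    (hρ_i : ∀ n ∈ π.ker, ∀ m : M, ρ n (i m) = i (n • m))
    (hρ_p : ∀ n ∈ π.ker, ∀ e : E, p (ρ n e) = p e)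
    (hinv : ∀ x : G, TwistEquiv π ρ i p x) :
    (∀ x : G, ∃ α : E → E, AutP π ρ i p α x)
    ∧ (∀ α : E → E, AutP π ρ i p α (1 : G) →
        ∃ m : M, (∀ n ∈ π.ker, n • m = m) ∧ α = fun y : E => y + p y • i m)
    ∧ (∀ m : M, (∀ n ∈ π.ker, n • m = m) →
        AutP π ρ i p (fun y : E => y + p y • i m) (1 : G)) := by
  refine ⟨?_, ?_, ?_⟩
  · -- surjectivity: use the equivalence β from Q-invariance
    intro x
    obtain ⟨β, hb, hadd, hpc, hirest, hcomm⟩ := hinv x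
    refine ⟨β, ⟨hb, hadd, hpc, hirest⟩, ?_⟩
    intro n hn e
    have h := hcomm (x * n * x⁻¹) (π.normal_ker.conj_mem n hn x) e
    simpa [mul_assoc] using h
  · -- kernel: elements over 1 are translations by N-invariant m
    intro α ⟨⟨hb, hadd, hpc, hirest⟩, hcomm⟩
    obtain ⟨e₀, he₀⟩ := hp 1
    -- α is a ℤ-linear-ish map: build AddMonoidHom
    have hzsmul : ∀ (k : ℤ) (e : E), α (k • e) = k • α e := fun k e =>
      map_zsmul (AddMonoidHom.mk' α (fun y z => hadd y z)) k e
    have hd : p (α e₀ - e₀) = 0 := by simp [hpc e₀]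
    obtain ⟨m, hm⟩ := (hex _).mp hd
    have key : ∀ y : E, α y = y + p y • i m := by
      intro y
      have h0 : p (y - p y • e₀) = 0 := by simp [he₀]
      obtain ⟨m', hm'⟩ := (hex _).mp h0
      have hy : y = i m' + p y • e₀ := by rw [hm']; abel
      calc α y = α (i m' + p y • e₀) := by rw [← hy]
        _ = i m' + p y • α e₀ := by rw [hadd, hirest, one_smul, hzsmul]
        _ = (i m' + p y • e₀) + p y • (α e₀ - e₀) := by rw [smul_sub]; abel
        _ = y + p y • i m := by rw [← hy, hm]
    refine ⟨m, ?_, funext key⟩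
    intro n hn
    apply hi
    have h1 : α (ρ n e₀) = ρ n e₀ + i m := by
      rw [key (ρ n e₀), hρ_p n hn, he₀, one_smul]
    have h2 : α (ρ n e₀) = ρ n e₀ + i (n • m) := by
      have := hcomm n hn e₀
      rw [this, one_mul, inv_one, mul_one, key e₀, he₀, one_smul, hρ_add n hn,
        hρ_i n hn]
    rw [h2] at h1
    exact add_left_cancel h1
  · -- the translations α_m with m ∈ M^N lie in Aut(e_M) over 1
    intro m hm
    have hpm : p (i m) = 0 := (hex (i m)).mpr ⟨m, rfl⟩
    have hρz : ∀ n ∈ π.ker, ∀ (k : ℤ) (e : E), ρ n (k • e) = k • ρ n e := by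
      intro n hn k e
      exact map_zsmul (AddMonoidHom.mk' (ρ n) (hρ_add n hn)) k e
    refine ⟨⟨?_, ?_, ?_, ?_⟩, ?_⟩
    · -- bijective with explicit inverse
      have : Function.LeftInverse (fun y : E => y - p y • i m)
          (fun y : E => y + p y • i m) ∧ Function.RightInverse
          (fun y : E => y - p y • i m) (fun y : E => y + p y • i m) := by
        constructor <;> intro y <;> simp [hpm] <;> abel
      exact ⟨this.1.injective, this.2.surjective⟩
    · intro y z; simp [add_smul]; abel
    · intro e; simp [hpm]
    · intro m'
      simp [(hex (i m')).mpr ⟨m', rfl⟩]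
    · intro n hn e
      simp only [one_mul, inv_one, mul_one]
      rw [hρ_add n hn, hρz n hn, hρ_i n hn, hm n hn, hρ_p n hn]
end

section
/- With notation as above, s(N) is a normal subgroup of Aut(e_M), the quotient Out(e_M) = Aut(e_M)/s(N) maps onto Q with kernel M^N (embedded via m ↦ class of (α_m, e)), and 0 → M^N → Out(e_M) → Q → 1 is a group extension with abelian kernel on which Q acts by the restriction of the G-action on M to M^N. -/
/-- With notation as above, `s(N)` is normal in the normalizer `Aut(e_M)`
(conjugating `s n` by `(α, x) ∈ Aut(e_M)` gives `s (x n x⁻¹)`), the quotient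
`Out(e_M) = Aut(e_M)/s(N)` maps onto `Q` with kernel `Mᴺ` (embedded via
`m ↦ [(α_m, 1)]`), and `0 → Mᴺ → Out(e_M) → Q → 1` is a group extension with abelian
kernel on which `Q` acts by the restriction to `Mᴺ` of the `G`-action on `M`.
Everything is phrased at the level of representatives: surjectivity onto `Q`;
the class of `(α, x)` maps to `1 ∈ Q` iff `(α, x) ∈ (α_m, 1) · s(N)` for some
`m ∈ Mᴺ` (with `x ∈ N`); injectivity of the embedding of `Mᴺ`; and conjugation of
`(α_m, 1)` by `(α, x)` is `(α_{x • m}, 1)` modulo `s(N)`. -/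
theorem out_extension {G Q M E : Type*} [Group G] [Group Q] [AddCommGroup M]
    [DistribMulAction G M] [AddCommGroup E]
    (π : G →* Q) (hπ : Function.Surjective π)
    (i : M →+ E) (p : E →+ ℤ)
    (hi : Function.Injective i) (hp : Function.Surjective p)
    (hex : ∀ e : E, p e = 0 ↔ ∃ m : M, i m = e)
    (ρ : G → E → E)
    (hρ_add : ∀ n ∈ π.ker, ∀ e e' : E, ρ n (e + e') = ρ n e + ρ n e')
    (hρ_mul : ∀ n ∈ π.ker, ∀ n' ∈ π.ker, ∀ e : E, ρ (n * n') e = ρ n (ρ n' e))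
    (hρ_one : ∀ e : E, ρ 1 e = e)
    (hρ_i : ∀ n ∈ π.ker, ∀ m : M, ρ n (i m) = i (n • m))
    (hρ_p : ∀ n ∈ π.ker, ∀ e : E, p (ρ n e) = p e)
    (hinv : ∀ x : G, TwistEquiv π ρ i p x) :
    -- s(N) is normal in Aut(e_M)
    (∀ (α : E → E) (x : G), AutP π ρ i p α x → ∀ n ∈ π.ker,
        x * n * x⁻¹ ∈ π.ker ∧ ∀ e : E, α (ρ n e) = ρ (x * n * x⁻¹) (α e))
    -- Out(e_M) surjects onto Q
    ∧ (∀ q : Q, ∃ (α : E → E) (x : G), AutP π ρ i p α x ∧ π x = q)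
    -- the kernel of Out(e_M) → Q is the image of Mᴺ
    ∧ (∀ (α : E → E) (x : G), AutP π ρ i p α x →
        (π x = 1 ↔ ∃ m : M, (∀ n ∈ π.ker, n • m = m) ∧ x ∈ π.ker ∧
          ∀ e : E, α e = ρ x e + p e • i m))
    -- Mᴺ embeds into Out(e_M)
    ∧ (∀ m m' : M, (∀ n ∈ π.ker, n • m = m) → (∀ n ∈ π.ker, n • m' = m') →
        (∃ n ∈ π.ker, (1 : G) = n ∧ ∀ y : E, y + p y • i m = ρ n y + p y • i m') →
        m = m')
    -- Q acts on Mᴺ by the restriction of the G-action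
    ∧ (∀ (α : E → E) (x : G), AutP π ρ i p α x → ∀ m : M, (∀ n ∈ π.ker, n • m = m) →
        ∀ e : E, α (e + p e • i m) = α e + p (α e) • i (x • m)) := by
  have hker : ∀ x : G, ∀ n ∈ π.ker, x * n * x⁻¹ ∈ π.ker := by
    intro x n hn
    rw [MonoidHom.mem_ker] at hn ⊢
    simp [hn]
  refine ⟨?_, ?_, ?_, ?_, ?_⟩
  · rintro α x ⟨hA, hN⟩ n hn
    exact ⟨hker x n hn, hN n hn⟩
  · intro q
    obtain ⟨x, hx⟩ := hπ q
    obtain ⟨β, hb1, hb2, hb3, hb4, hb5⟩ := hinv x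
    refine ⟨β, x, ⟨⟨hb1, hb2, hb3, hb4⟩, ?_⟩, hx⟩
    intro n hn e
    have h := hb5 (x * n * x⁻¹) (hker x n hn) e
    have hg : x⁻¹ * (x * n * x⁻¹) * x = n := by group
    rwa [hg] at h
  · rintro α x ⟨⟨hbij, hadd, hpα, him⟩, hnorm⟩
    constructor
    · intro hx1
      have hxk : x ∈ π.ker := MonoidHom.mem_ker.mpr hx1
      obtain ⟨e₁, he₁⟩ := hp 1
      set D : E →+ E :=
        AddMonoidHom.mk' α hadd - AddMonoidHom.mk' (ρ x) (hρ_add x hxk) with hD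
      have hDapp : ∀ e, D e = α e - ρ x e := fun e => rfl
      have hDM : ∀ m : M, D (i m) = 0 := by
        intro m
        rw [hDapp, him, hρ_i x hxk]
        simp
      have hpδ : p (D e₁) = 0 := by
        rw [hDapp]; simp [hpα, hρ_p x hxk]
      obtain ⟨m, hm⟩ := (hex _).1 hpδ
      have hDe : ∀ e : E, D e = p e • i m := by
        intro e
        obtain ⟨m', hm'⟩ := (hex (e - p e • e₁)).1 (by simp [he₁])
        have he : e = i m' + p e • e₁ := by rw [hm']; abel
        calc D e = D (i m') + p e • D e₁ := by
              rw [← map_zsmul, ← map_add, ← he]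
          _ = p e • i m := by rw [hDM, hm]; abel
      have hαe : ∀ e : E, α e = ρ x e + p e • i m := by
        intro e
        have h := hDe e
        rw [hDapp] at h
        rw [← h]; abel
      have hinvm : ∀ n ∈ π.ker, n • m = m := by
        intro n hn
        have hk : x⁻¹ * n * x ∈ π.ker := by
          have := hker x⁻¹ n hn; simpa using this
        set k := x⁻¹ * n * x with hkdef
        have hxkx : x * k * x⁻¹ = n := by rw [hkdef]; group
        have h1 := hnorm k hk e₁
        rw [hxkx] at h1
        have hL : α (ρ k e₁) = ρ (x * k) e₁ + i m := by
          rw [hαe, hρ_p k hk, he₁, ← hρ_mul x hxk k hk]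
          simp
        have hxkmem : x * k ∈ π.ker := mul_mem hxk hk
        have hR : ρ n (α e₁) = ρ (x * k) e₁ + i (n • m) := by
          rw [hαe, he₁, one_smul]
          rw [hρ_add n hn, hρ_i n hn]
          have h2 : ρ n (ρ x e₁) = ρ (n * x) e₁ := (hρ_mul n hn x hxk e₁).symm
          rw [h2]
          have h3 : n * x = x * k := by rw [hkdef]; group
          rw [h3]
        rw [hL, hR] at h1
        exact (hi (add_left_cancel h1)).symm
      exact ⟨m, hinvm, hxk, hαe⟩
    · rintro ⟨m, _, hxk, _⟩
      exact MonoidHom.mem_ker.mp hxk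
  · rintro m m' _ _ ⟨n, hn, h1, hy⟩
    obtain ⟨e₁, he₁⟩ := hp 1
    have h := hy e₁
    rw [← h1, hρ_one, he₁, one_smul, one_smul] at h
    exact hi (add_left_cancel h)
  · rintro α x ⟨⟨hbij, hadd, hpα, him⟩, hnorm⟩ m _ e
    have hz : α (p e • i m) = p e • i (x • m) := by
      rw [show α (p e • i m) = (AddMonoidHom.mk' α hadd) (p e • i m) from rfl,
        map_zsmul]
      simp [him]
    rw [hadd, hz, hpα]
end

section
/- Let 1 → N → G → Q → 1 be a group extension, M a G-module, φ : N → M a 1-cocycle, and s : N → M ⋊ G, s(n) = (φ(n), n) the corresponding section. An element (m, x) ∈ M ⋊ G normalizes s(N) if and only if for every n ∈ N, x·φ(x⁻¹nx) − φ(n) = n·m − m; in particular, the normalizer N_{M⋊G}(sN) surjects onto G if and only if the cohomology class [φ] ∈ H¹(N, M) is Q-invariant. -/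
/-- The multiplication of the semidirect product `M ⋊ G` (for the `G`-action on the
abelian group `M`), encoded on the underlying set `M × G`:
`(m, x) * (m', x') = (m + x • m', x * x')`. -/
def sdMul {M G : Type*} [AddCommGroup M] [Group G] [DistribMulAction G M]
    (a b : M × G) : M × G :=
  (a.1 + a.2 • b.1, a.2 * b.2)

lemma sd_key {M G : Type*} [AddCommGroup M] [Group G] [DistribMulAction G M]
    (φ : G → M) (m : M) (x n : G) :
    sdMul (sdMul (m, x) (φ n, n)) (-(x⁻¹ • m), x⁻¹)
      = (m + x • φ n - (x * n * x⁻¹) • m, x * n * x⁻¹) := by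
  simp [sdMul, smul_neg, smul_smul, sub_eq_add_neg, mul_assoc]

/-- Let `1 → N → G →^π Q → 1` be a group extension, `M` a `G`-module, `φ : N → M` a
1-cocycle and `s n = (φ n, n)` the corresponding section `N → M ⋊ G`.  An element
`(m, x) ∈ M ⋊ G` normalizes `s(N)` iff for every `n ∈ N`,
`x • φ(x⁻¹ n x) - φ n = n • m - m`; in particular the normalizer of `s(N)` surjects
onto `G` iff the class `[φ] ∈ H¹(N, M)` is `Q`-invariant (for every `x ∈ G` the
conjugated cocycle differs from `φ` by a principal cocycle). -/
theorem normalizer_condition {G Q M : Type*} [Group G] [Group Q] [AddCommGroup M]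
    [DistribMulAction G M] (π : G →* Q) (hπ : Function.Surjective π)
    (φ : G → M)
    (hφ : ∀ n ∈ π.ker, ∀ n' ∈ π.ker, φ (n * n') = φ n + n • φ n') :
    (∀ (m : M) (x : G),
      (∀ n ∈ π.ker, ∃ n' ∈ π.ker,
          sdMul (sdMul (m, x) (φ n, n)) (-(x⁻¹ • m), x⁻¹) = (φ n', n'))
      ↔ ∀ n ∈ π.ker, x • φ (x⁻¹ * n * x) - φ n = n • m - m)
    ∧
    ((∀ x : G, ∃ m : M, ∀ n ∈ π.ker, ∃ n' ∈ π.ker,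
        sdMul (sdMul (m, x) (φ n, n)) (-(x⁻¹ • m), x⁻¹) = (φ n', n'))
      ↔ ∀ x : G, ∃ m : M, ∀ n ∈ π.ker, x • φ (x⁻¹ * n * x) - φ n = n • m - m) := by
  have main : ∀ (m : M) (x : G),
      (∀ n ∈ π.ker, ∃ n' ∈ π.ker,
          sdMul (sdMul (m, x) (φ n, n)) (-(x⁻¹ • m), x⁻¹) = (φ n', n'))
      ↔ ∀ n ∈ π.ker, x • φ (x⁻¹ * n * x) - φ n = n • m - m := by
    intro m x
    constructor
    · intro hA n hn
      have hn₀ : x⁻¹ * n * x ∈ π.ker := π.normal_ker.conj_mem' n hn x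
      obtain ⟨n', hn', heq⟩ := hA _ hn₀
      rw [sd_key] at heq
      have h2 : x * (x⁻¹ * n * x) * x⁻¹ = n := by group
      rw [h2] at heq
      obtain ⟨h1, h3⟩ := Prod.mk.inj heq
      subst h3
      rw [← h1]; abel
    · intro hB n hn
      have hn' : x * n * x⁻¹ ∈ π.ker := by
        have := π.normal_ker.conj_mem n hn x
        simpa [mul_assoc] using this
      refine ⟨x * n * x⁻¹, hn', ?_⟩
      rw [sd_key]
      have := hB _ hn'
      have h2 : x⁻¹ * (x * n * x⁻¹) * x = n := by group
      rw [h2] at this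
      rw [sub_eq_iff_eq_add] at this
      have h4 : φ (x * n * x⁻¹) = m + x • φ n - (x * n * x⁻¹) • m := by
        rw [this]; abel
      rw [h4]
  exact ⟨main, by
    constructor
    · intro h x
      obtain ⟨m, hm⟩ := h x
      exact ⟨m, (main m x).mp hm⟩
    · intro h x
      obtain ⟨m, hm⟩ := h x
      exact ⟨m, (main m x).mpr hm⟩⟩
end

section
/- In the setting of the previous statement, suppose [φ] ∈ H¹(N, M)^Q. Then the kernel of the surjection N_{M⋊G}(sN) → G is {(m, e) : m ∈ M^N}, so 0 → M^N → N_{M⋊G}(sN) → G → 1 is exact; moreover sN is normal in N_{M⋊G}(sN) with sN ∩ (M^N × {e}) trivial, and passing to the quotient yields a group extension 0 → M^N → N_{M⋊G}(sN)/sN → Q → 1. -/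
/-- `Normalizes π φ m x` : the element `(m, x)` of `M ⋊ G` normalizes the subgroup
`s(N) = {(φ n, n) : n ∈ N}`, `N = ker π`. -/
def Normalizes {M G Q : Type*} [AddCommGroup M] [Group G] [Group Q]
    [DistribMulAction G M] (π : G →* Q) (φ : G → M) (m : M) (x : G) : Prop :=
  ∀ n ∈ π.ker, ∃ n' ∈ π.ker,
    sdMul (sdMul (m, x) (φ n, n)) (-(x⁻¹ • m), x⁻¹) = (φ n', n')

/-- Suppose `[φ] ∈ H¹(N, M)^Q`.  Then the kernel of the surjection
`N_{M⋊G}(sN) → G` is `{(m, 1) : m ∈ Mᴺ}`, so `0 → Mᴺ → N_{M⋊G}(sN) → G → 1` is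
exact; moreover `sN` is contained in (and normal in) `N_{M⋊G}(sN)`, meets
`Mᴺ × {1}` trivially, and passing to the quotient yields a group extension
`0 → Mᴺ → N_{M⋊G}(sN)/sN → Q → 1` (surjectivity onto `Q`, kernel the image of
`Mᴺ`, and injectivity of `Mᴺ` in the quotient, all phrased on representatives). -/
theorem normalizer_quotient_extension {G Q M : Type*} [Group G] [Group Q]
    [AddCommGroup M] [DistribMulAction G M]
    (π : G →* Q) (hπ : Function.Surjective π)
    (φ : G → M)
    (hφ : ∀ n ∈ π.ker, ∀ n' ∈ π.ker, φ (n * n') = φ n + n • φ n')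
    (hinv : ∀ x : G, ∃ m : M, ∀ n ∈ π.ker, x • φ (x⁻¹ * n * x) - φ n = n • m - m) :
    -- the normalizer surjects onto G
    (∀ x : G, ∃ m : M, Normalizes π φ m x)
    -- its kernel is Mᴺ
    ∧ (∀ m : M, Normalizes π φ m (1 : G) ↔ ∀ n ∈ π.ker, n • m = m)
    -- sN is contained in the normalizer
    ∧ (∀ n ∈ π.ker, Normalizes π φ (φ n) n)
    -- sN meets Mᴺ × {1} trivially
    ∧ (∀ n ∈ π.ker, ∀ m : M, ((φ n, n) : M × G) = (m, (1 : G)) → n = 1)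
    -- the quotient surjects onto Q
    ∧ (∀ q : Q, ∃ (m : M) (x : G), Normalizes π φ m x ∧ π x = q)
    -- the kernel of the quotient map to Q is the image of Mᴺ
    ∧ (∀ (m : M) (x : G), Normalizes π φ m x →
        (π x = 1 ↔ ∃ m₀ : M, (∀ n ∈ π.ker, n • m₀ = m₀) ∧
          ∃ n ∈ π.ker, ((m, x) : M × G) = sdMul (m₀, (1 : G)) (φ n, n)))
    -- Mᴺ injects into the quotient
    ∧ (∀ m m' : M, (∀ n ∈ π.ker, n • m = m) → (∀ n ∈ π.ker, n • m' = m') →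
        (∃ n ∈ π.ker, ((m, (1 : G)) : M × G) = sdMul (m', (1 : G)) (φ n, n)) →
        m = m') := by
  have hone : φ 1 = 0 := by
    have h := hφ 1 (by simp) 1 (by simp)
    simpa using h
  have hconj : ∀ (x : G), ∀ n ∈ π.ker, x * n * x⁻¹ ∈ π.ker := by
    intro x n hn
    simp only [MonoidHom.mem_ker, map_mul, map_inv] at hn ⊢
    simp [hn]
  have hinvmem : ∀ n ∈ π.ker, n⁻¹ ∈ π.ker := fun n hn => π.ker.inv_mem hn
  have hinvφ : ∀ n ∈ π.ker, φ n⁻¹ = -(n⁻¹ • φ n) := by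
    intro n hn
    have h := hφ n⁻¹ (hinvmem n hn) n hn
    rw [inv_mul_cancel, hone] at h
    linear_combination (norm := abel1) -h
  have key : ∀ (m : M) (x : G), Normalizes π φ m x ↔
      ∀ n ∈ π.ker, φ (x * n * x⁻¹) = m + x • φ n - (x * n * x⁻¹) • m := by
    intro m x
    constructor
    · intro h n hn
      obtain ⟨n', hn', heq⟩ := h n hn
      simp only [sdMul, Prod.mk.injEq] at heq
      obtain ⟨hA, hB⟩ := heq
      subst hB
      rw [smul_neg, ← mul_smul] at hA
      linear_combination (norm := abel1) -hA
    · intro h n hn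
      refine ⟨x * n * x⁻¹, hconj x n hn, ?_⟩
      simp only [sdMul, Prod.mk.injEq]
      refine ⟨?_, trivial⟩
      rw [smul_neg, ← mul_smul]
      linear_combination (norm := abel1) -(h n hn)
  have surjG : ∀ x : G, ∃ m : M, Normalizes π φ m x := by
    intro x
    obtain ⟨m, hm⟩ := hinv x
    refine ⟨m, (key m x).2 ?_⟩
    intro n hn
    have h := hm (x * n * x⁻¹) (hconj x n hn)
    rw [show x⁻¹ * (x * n * x⁻¹) * x = n by group] at h
    linear_combination (norm := abel1) -h
  refine ⟨surjG, ?_, ?_, ?_, ?_, ?_, ?_⟩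
  · -- kernel is Mᴺ
    intro m
    rw [key]
    constructor
    · intro h n hn
      have h' := h n hn
      simp only [one_mul, mul_one, inv_one, one_smul] at h'
      linear_combination (norm := abel1) h'
    · intro h n hn
      simp only [one_mul, mul_one, inv_one, one_smul, h n hn]
      abel
  · -- sN contained in normalizer
    intro n hn
    rw [key]
    intro k hk
    calc φ (n * k * n⁻¹) = φ n + n • φ (k * n⁻¹) := by
          rw [mul_assoc]; exact hφ n hn _ (π.ker.mul_mem hk (hinvmem n hn))
      _ = φ n + n • (φ k + k • φ n⁻¹) := by rw [hφ k hk n⁻¹ (hinvmem n hn)]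
      _ = φ n + n • φ k - (n * k * n⁻¹) • φ n := by
          rw [hinvφ n hn, smul_add, smul_neg, smul_neg, ← mul_smul, ← mul_smul]
          abel
  · -- trivial intersection
    intro n hn m h
    exact (Prod.mk.injEq _ _ _ _ ▸ h).2
  · -- surjectivity onto Q
    intro q
    obtain ⟨x, hx⟩ := hπ q
    obtain ⟨m, hm⟩ := surjG x
    exact ⟨m, x, hm, hx⟩
  · -- kernel of map to Q
    intro m x hmx
    constructor
    · intro hx1
      have hxker : x ∈ π.ker := hx1
      refine ⟨m - φ x, ?_, x, hxker, ?_⟩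
      · intro n hn
        have hmem : x⁻¹ * n * x ∈ π.ker :=
          π.ker.mul_mem (π.ker.mul_mem (hinvmem x hxker) hn) hxker
        have hk := (key m x).1 hmx (x⁻¹ * n * x) hmem
        rw [show x * (x⁻¹ * n * x) * x⁻¹ = n by group] at hk
        have e2 : x • φ (x⁻¹ * n * x) = -φ x + (φ n + n • φ x) := by
          rw [mul_assoc, hφ x⁻¹ (hinvmem x hxker) (n * x) (π.ker.mul_mem hn hxker),
            hφ n hn x hxker, hinvφ x hxker, smul_add, smul_neg, ← mul_smul,
            ← mul_smul, mul_inv_cancel, one_smul, one_smul]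
        rw [e2] at hk
        rw [smul_sub]
        linear_combination (norm := abel1) hk
      · simp only [sdMul, Prod.mk.injEq, one_smul, one_mul]
        exact ⟨by abel, trivial⟩
    · rintro ⟨m₀, hm₀, n, hn, heq⟩
      simp only [sdMul, Prod.mk.injEq, one_mul] at heq
      rw [heq.2]
      exact hn
  · -- injectivity
    rintro m m' hm hm' ⟨n, hn, heq⟩
    simp only [sdMul, Prod.mk.injEq, one_mul, one_smul] at heq
    obtain ⟨hA, hB⟩ := heq
    rw [← hB, hone, add_zero] at hA
    exact hA
end

section
/- In the setting of the previous statement, the assignment x ↦ d_x defines a derivation E → Z¹(N, M) modulo principal cocycles, which descends to a well-defined derivation δ_e : Q → H¹(N, M); that is, [d_{xy}] = [d_x] + p(x)·[d_y] for all x, y ∈ E, and [d_x] depends only on the image of p(x) in Q. -/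
/-- In the setting of the previous statement, the assignment `x ↦ [d_x] ∈ H¹(N, M)` is
a derivation of `E` that descends to a well-defined derivation `δ_e : Q → H¹(N, M)`:
`[d_{xy}] = [d_x] + p(x) • [d_y]` for all `x, y ∈ E` (equality of cocycles on
`N = ker π` up to a principal cocycle `n ↦ n • m - m`, with
`(p(x) • d_y)(n) = p(x) • d_y(p(x)⁻¹ n p(x))`), and `[d_x]` depends only on the image
of `p x` in `Q`. -/
theorem conjugated_splitting_derivation {G Q M E : Type*} [Group G] [Group Q]
    [AddCommGroup M] [DistribMulAction G M] [Group E]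
    (π : G →* Q) (hπ : Function.Surjective π)
    (p : E →* G) (hp : Function.Surjective p)
    (j : M → E) (hj : Function.Injective j)
    (hj_mul : ∀ m m' : M, j (m + m') = j m * j m')
    (hker : ∀ e : E, p e = 1 ↔ ∃ m : M, j m = e)
    (hconj : ∀ (x : E) (m : M), x * j m * x⁻¹ = j (p x • m))
    (s : G → E)
    (hs : ∀ n ∈ π.ker, p (s n) = n)
    (hs_mul : ∀ n ∈ π.ker, ∀ n' ∈ π.ker, s (n * n') = s n * s n')
    (D : E → G → M)
    (hD : ∀ x : E, ∀ n ∈ π.ker,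
      j (D x n) = x * s ((p x)⁻¹ * n * p x) * x⁻¹ * (s n)⁻¹) :
    -- derivation property modulo principal cocycles
    (∀ x y : E, ∃ m : M, ∀ n ∈ π.ker,
        D (x * y) n = D x n + p x • D y ((p x)⁻¹ * n * p x) + (n • m - m))
    -- the class [d_x] only depends on the image of p x in Q
    ∧ (∀ x y : E, π (p x) = π (p y) →
        ∃ m : M, ∀ n ∈ π.ker, D x n = D y n + (n • m - m)) := by
  -- conjugates of kernel elements stay in the kernel
  have hconjker : ∀ (g : G), ∀ n ∈ π.ker, g⁻¹ * n * g ∈ π.ker := by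
    intro g n hn
    rw [MonoidHom.mem_ker] at hn ⊢
    rw [map_mul, map_mul, map_inv, hn, mul_one, inv_mul_cancel]
  -- the exact cocycle identity (with no principal correction)
  have key : ∀ x y : E, ∀ n ∈ π.ker,
      D (x * y) n = D x n + p x • D y ((p x)⁻¹ * n * p x) := by
    intro x y n hn
    have hn' : (p x)⁻¹ * n * p x ∈ π.ker := hconjker _ n hn
    apply hj
    rw [add_comm (D x n), hD _ n hn, hj_mul, hD x n hn, ← hconj x (D y _), hD y _ hn']
    have harg : (p y)⁻¹ * ((p x)⁻¹ * n * p x) * p y = (p (x * y))⁻¹ * n * p (x * y) := by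
      rw [map_mul]; group
    rw [harg]
    group
  refine ⟨fun x y => ⟨0, fun n hn => by
    rw [key x y n hn, smul_zero, sub_zero, add_zero]⟩, ?_⟩
  -- j is a homomorphism in the usual sense
  have hj0 : j 0 = 1 := by
    have := hj_mul 0 0
    rw [add_zero] at this
    exact (mul_left_cancel (a := j 0) (by rw [← this, mul_one])).symm
  have hjneg : ∀ m : M, j (-m) = (j m)⁻¹ := by
    intro m
    rw [eq_inv_iff_mul_eq_one, ← hj_mul, neg_add_cancel, hj0]
  -- D vanishes on the splitting
  have hDs : ∀ g ∈ π.ker, ∀ n ∈ π.ker, D (s g) n = 0 := by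
    intro g hg n hn
    apply hj
    rw [hD _ n hn, hj0, hs g hg]
    have h1 : g⁻¹ * n * g ∈ π.ker := hconjker _ n hn
    have h2 : s g * s (g⁻¹ * n * g) = s n * s g := by
      rw [← hs_mul g hg _ h1, ← hs_mul n hn g hg]
      congr 1
      group
    rw [h2]
    group
  -- D on kernel elements j m₀
  have hDj : ∀ m₀ : M, ∀ n ∈ π.ker, D (j m₀) n = m₀ - n • m₀ := by
    intro m₀ n hn
    have hp1 : p (j m₀) = 1 := (hker (j m₀)).mpr ⟨m₀, rfl⟩
    apply hj
    rw [hD _ n hn, hp1, inv_one, one_mul, mul_one]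
    have hc : s n * (j m₀)⁻¹ * (s n)⁻¹ = j (n • (-m₀)) := by
      rw [← hjneg, hconj (s n) (-m₀), hs n hn]
    calc j m₀ * s n * (j m₀)⁻¹ * (s n)⁻¹ = j m₀ * (s n * (j m₀)⁻¹ * (s n)⁻¹) := by group
      _ = j m₀ * j (n • (-m₀)) := by rw [hc]
      _ = j (m₀ + n • (-m₀)) := (hj_mul _ _).symm
      _ = j (m₀ - n • m₀) := by rw [smul_neg, ← sub_eq_add_neg]
  intro x y hxy
  have hw : p (y⁻¹ * x) ∈ π.ker := by
    rw [MonoidHom.mem_ker, map_mul, map_inv, map_mul, map_inv, hxy, inv_mul_cancel]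
  set g := p (y⁻¹ * x) with hg
  have hk : p ((s g)⁻¹ * (y⁻¹ * x)) = 1 := by
    rw [map_mul, map_inv, hs g hw, ← hg, inv_mul_cancel]
  obtain ⟨m₀, hm₀⟩ := (hker _).mp hk
  refine ⟨-((p y * g) • m₀), fun n hn => ?_⟩
  have hx : x = y * (s g * j m₀) := by
    rw [hm₀]; group
  have hn' : (p y)⁻¹ * n * p y ∈ π.ker := hconjker _ n hn
  have hn'' : g⁻¹ * ((p y)⁻¹ * n * p y) * g ∈ π.ker := hconjker _ _ hn'
  have step1 : D x n = D y n + p y • D (s g * j m₀) ((p y)⁻¹ * n * p y) := by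
    rw [hx] at *
    exact key y (s g * j m₀) n hn
  have step2 : D (s g * j m₀) ((p y)⁻¹ * n * p y)
      = g • (m₀ - (g⁻¹ * ((p y)⁻¹ * n * p y) * g) • m₀) := by
    rw [key (s g) (j m₀) _ hn', hDs g hw _ hn', zero_add, hs g hw,
      hDj m₀ _ hn'']
  rw [step1, step2]
  congr 1
  simp only [smul_sub, smul_smul, smul_neg, sub_neg_eq_add]
  have hidx : p y * (g * (g⁻¹ * ((p y)⁻¹ * n * p y) * g)) = n * (p y * g) := by
    group
  rw [hidx, mul_smul]
  abel
end

section
/- Let 1 → N → G →^π Q → 1 be a group extension, M a G-module, e_M : 0 → M → E_M → ℤ → 0 an extension of N-modules with Q-invariant class, μ : IG → M the restriction of an N-lift ν : ℤG → E_M of id_ℤ, and d : Q → Hom_N(IG, M) the derivation d(q) = α_x μ α_x⁻¹ − μ. Then the set Hom_N(ℤG, M) ⋊_T Q = {(φ, q) ∈ Hom_N(ℤG, M) × Q : φ|_{IG} = d(q)} is a subgroup of the semidirect product Hom_N(ℤG, M) ⋊ Q, the projection to Q is surjective with kernel isomorphic to M^N, and 0 → M^N → Hom_N(ℤG, M) ⋊_T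 Q → Q → 1 is a group extension. -/
/-!
`(x • f)(a) = x • f (x⁻¹ a)` is an action of `G` on maps `IG → M`, and `d(π x) = x • μ - μ`.
Since `μ` is the restriction of the `N`-map `ν`, it is fixed by `N`, so `x • μ` only depends on
`π x`; the condition `φ|_{IG} = d(q)` is then a cocycle condition, stable under the
semidirect product operations. A lift of `q = π x` comes from an equivalence
`β : x • e_M ≃ e_M`: the map `a ↦ β (ν (x⁻¹ a)) - ν a` is a difference of two lifts of `ε`,
hence `M`-valued, and restricts to `d(q)` on `IG`. Over `q = 1` the condition says that `φ`
vanishes on `IG = ker ε`, i.e. `φ = ε(·) • φ 1`.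
-/

set_option maxHeartbeats 1000000

/-- Membership in the semidirect fiber product `Hom_N(ℤG, M) ⋊_T Q`: the pair
`(φ, q)` with `φ : ℤG → M` additive and `N`-equivariant (`N = ker π`) such that the
restriction of `φ` to the augmentation ideal `IG` equals
`d(q) = α_x ∘ μ ∘ α_{x⁻¹} - μ` for any (equivalently every) lift `x` of `q`. -/
def FiberMem {G Q M : Type*} [Group G] [Group Q] [AddCommGroup M]
    [DistribMulAction G M] (π : G →* Q) (μ : augIdeal G → M)
    (φ : MonoidAlgebra ℤ G → M) (q : Q) : Prop :=
  (∀ a b : MonoidAlgebra ℤ G, φ (a + b) = φ a + φ b) ∧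
  (∀ n ∈ π.ker, ∀ a : MonoidAlgebra ℤ G, φ (MonoidAlgebra.of ℤ G n * a) = n • φ a) ∧
  ∀ x : G, π x = q → ∀ a : augIdeal G,
    φ ↑a = x • μ ⟨MonoidAlgebra.of ℤ G x⁻¹ * ↑a, (augIdeal G).mul_mem_left _ a.2⟩ - μ a

open MonoidAlgebra (of)

section Augmentation

variable {G M : Type*} [Group G] [AddCommGroup M]

lemma aug_of (x : G) : aug G (of ℤ G x) = 1 := by
  simp [aug]

lemma mem_augIdeal_iff {a : MonoidAlgebra ℤ G} : a ∈ augIdeal G ↔ aug G a = 0 :=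
  RingHom.mem_ker

lemma sub_aug_smul_one_mem_augIdeal (a : MonoidAlgebra ℤ G) : a - aug G a • 1 ∈ augIdeal G := by
  simp [mem_augIdeal_iff]

lemma eq_aug_smul_of_forall_augIdeal_eq_zero (φ : MonoidAlgebra ℤ G →+ M)
    (hφ : ∀ a ∈ augIdeal G, φ a = 0) (a : MonoidAlgebra ℤ G) : φ a = aug G a • φ 1 := by
  rw [← map_zsmul, ← sub_eq_zero, ← map_sub, hφ _ (sub_aug_smul_one_mem_augIdeal a)]

end Augmentation

section Twist

variable {G Q M : Type*} [Group G] [Group Q] [AddCommGroup M] [DistribMulAction G M]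

/-- The action `(x • f)(a) = x • f (x⁻¹ a)` of `G` on maps `IG → M`; `d(π x) = augTwist x μ - μ`. -/
noncomputable def augTwist (x : G) (f : augIdeal G → M) : augIdeal G → M :=
  fun a => x • f ⟨of ℤ G x⁻¹ * a, (augIdeal G).mul_mem_left _ a.2⟩

lemma augTwist_one (f : augIdeal G → M) : augTwist 1 f = f := by
  ext a
  simp only [augTwist, inv_one, map_one, one_mul, one_smul]

lemma augTwist_mul (x y : G) (f : augIdeal G → M) :
    augTwist (x * y) f = augTwist x (augTwist y f) := by
  ext a
  simp only [augTwist, mul_inv_rev, map_mul, mul_assoc, mul_smul]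

lemma augTwist_sub (x : G) (f g : augIdeal G → M) :
    augTwist x (f - g) = augTwist x f - augTwist x g := by
  ext a
  simp [augTwist, smul_sub]

lemma augTwist_eq_of_map_eq {π : G →* Q} {μ : augIdeal G → M}
    (hμ : ∀ n ∈ π.ker, augTwist n μ = μ) {x y : G} (hxy : π x = π y) :
    augTwist x μ = augTwist y μ := by
  have hn : x⁻¹ * y ∈ π.ker := by simp [hxy]
  rw [← mul_inv_cancel_left x y, augTwist_mul, hμ _ hn]

lemma augTwist_eq_self_of_restrict {E : Type*} {N : Subgroup G} {i : M → E}
    (hi : Function.Injective i) {ρ : G → E → E} (hρ_i : ∀ n ∈ N, ∀ m : M, ρ n (i m) = i (n • m))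
    {ν : MonoidAlgebra ℤ G → E} (hν : ∀ n ∈ N, ∀ a, ν (of ℤ G n * a) = ρ n (ν a))
    {μ : augIdeal G → M} (hμ : ∀ a, i (μ a) = ν a) {n : G} (hn : n ∈ N) :
    augTwist n μ = μ := by
  ext a
  apply hi
  rw [augTwist, ← hρ_i n hn, hμ, ← hν n hn, ← mul_assoc, ← map_mul, mul_inv_cancel, map_one,
    one_mul, hμ]

/-- The twist `(x • φ)(a) = x • φ (x⁻¹ a)` of an `N`-map is an `N`-map, `N` being normal. -/
lemma twist_equivariant {N : Subgroup G} [N.Normal] {φ : MonoidAlgebra ℤ G → M}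
    (hφ : ∀ n ∈ N, ∀ a, φ (of ℤ G n * a) = n • φ a) (x : G) {n : G} (hn : n ∈ N)
    (a : MonoidAlgebra ℤ G) :
    x • φ (of ℤ G x⁻¹ * (of ℤ G n * a)) = n • x • φ (of ℤ G x⁻¹ * a) := by
  have hconj := ‹N.Normal›.conj_mem' n hn x
  rw [← mul_assoc, ← map_mul, show x⁻¹ * n = x⁻¹ * n * x * x⁻¹ by group, map_mul, mul_assoc,
    hφ _ hconj, smul_smul, smul_smul]
  congr 1
  group

end Twist

namespace FiberMem

variable {G Q M : Type*} [Group G] [Group Q] [AddCommGroup M] [DistribMulAction G M]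
  {π : G →* Q} {μ : augIdeal G → M} {φ φ' : MonoidAlgebra ℤ G → M} {q q' : Q} {x : G}

lemma restrict_eq (h : FiberMem π μ φ q) (hx : π x = q) (a : augIdeal G) :
    φ a = augTwist x μ a - μ a :=
  h.2.2 x hx a

lemma twist_restrict_eq (h : FiberMem π μ φ q) {y : G} (hy : π y = q) (x : G)
    (a : augIdeal G) :
    x • φ (of ℤ G x⁻¹ * a) = augTwist x (augTwist y μ) a - augTwist x μ a := by
  rw [← Pi.sub_apply, ← augTwist_sub]
  exact congrArg (x • ·) (h.restrict_eq hy ⟨_, (augIdeal G).mul_mem_left (of ℤ G x⁻¹) a.2⟩)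

lemma of_lift (hμ : ∀ n ∈ π.ker, augTwist n μ = μ)
    (hadd : ∀ a b, φ (a + b) = φ a + φ b)
    (hequiv : ∀ n ∈ π.ker, ∀ a, φ (of ℤ G n * a) = n • φ a)
    (hres : ∀ a : augIdeal G, φ a = augTwist x μ a - μ a) : FiberMem π μ φ (π x) :=
  ⟨hadd, hequiv, fun y hy a => by rw [hres, augTwist_eq_of_map_eq hμ hy.symm]; rfl⟩

lemma mul (h : FiberMem π μ φ q) (h' : FiberMem π μ φ' q') (hx : π x = q) :
    FiberMem π μ (fun a => φ a + x • φ' (of ℤ G x⁻¹ * a)) (q * q') := by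
  refine ⟨fun a b => ?_, fun n hn a => ?_, fun y hy a => ?_⟩
  · simp only [mul_add, h.1, h'.1, smul_add]
    abel
  · simp only [h.2.1 n hn, twist_equivariant h'.2.1 x hn, smul_add]
  · have hx' : π (x⁻¹ * y) = q' := by rw [map_mul, map_inv, hx, hy, inv_mul_cancel_left]
    show φ a + x • φ' (of ℤ G x⁻¹ * a) = augTwist y μ a - μ a
    rw [h.restrict_eq hx, h'.twist_restrict_eq hx', ← augTwist_mul, mul_inv_cancel_left]
    abel

lemma inv (hμ : ∀ n ∈ π.ker, augTwist n μ = μ) (h : FiberMem π μ φ q) (hx : π x = q) :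
    FiberMem π μ (fun a => -(x⁻¹ • φ (of ℤ G x * a))) q⁻¹ := by
  subst hx
  rw [← map_inv]
  refine of_lift hμ (fun a b => ?_) (fun n hn a => ?_) (fun a => ?_)
  · simp only [mul_add, h.1, smul_add, neg_add]
  · simpa only [inv_inv, smul_neg] using congrArg Neg.neg (twist_equivariant h.2.1 x⁻¹ hn a)
  · have h_res := h.twist_restrict_eq rfl x⁻¹ a
    rw [inv_inv] at h_res
    rw [h_res, ← augTwist_mul, inv_mul_cancel, augTwist_one]
    abel

lemma forall_augIdeal_eq_zero (h : FiberMem π μ φ 1) : ∀ a ∈ augIdeal G, φ a = 0 :=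
  fun a ha => by rw [h.restrict_eq (map_one π) ⟨a, ha⟩, augTwist_one, sub_self]

lemma eq_aug_smul (h : FiberMem π μ φ 1) (a : MonoidAlgebra ℤ G) : φ a = aug G a • φ 1 :=
  eq_aug_smul_of_forall_augIdeal_eq_zero (AddMonoidHom.mk' φ h.1) h.forall_augIdeal_eq_zero a

lemma smul_one_eq (h : FiberMem π μ φ 1) {n : G} (hn : n ∈ π.ker) : n • φ 1 = φ 1 := by
  rw [← h.2.1 n hn, mul_one, h.eq_aug_smul, aug_of, one_smul]

end FiberMem

section Extension

variable {G Q M : Type*} [Group G] [Group Q] [AddCommGroup M] [DistribMulAction G M]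
  {π : G →* Q} {μ : augIdeal G → M}

lemma fiberMem_aug_smul (hμ : ∀ n ∈ π.ker, augTwist n μ = μ) {m : M}
    (hm : ∀ n ∈ π.ker, n • m = m) : FiberMem π μ (fun a => aug G a • m) 1 := by
  rw [← map_one π]
  refine FiberMem.of_lift hμ (fun a b => ?_) (fun n hn a => ?_) (fun a => ?_)
  · rw [map_add, add_smul]
  · rw [map_mul, aug_of, one_mul, smul_comm, hm n hn]
  · rw [mem_augIdeal_iff.1 a.2, augTwist_one, sub_self, zero_smul]

lemma exists_fiberMem_of_twistEquiv {E : Type*} [AddCommGroup E] {i : M →+ E} {p : E →+ ℤ}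
    (hi : Function.Injective i) (hex : ∀ e : E, p e = 0 ↔ ∃ m : M, i m = e) {ρ : G → E → E}
    (hρ_add : ∀ n ∈ π.ker, ∀ e e' : E, ρ n (e + e') = ρ n e + ρ n e')
    (hρ_i : ∀ n ∈ π.ker, ∀ m : M, ρ n (i m) = i (n • m)) {ν : MonoidAlgebra ℤ G →+ E}
    (hν_equiv : ∀ n ∈ π.ker, ∀ a, ν (of ℤ G n * a) = ρ n (ν a))
    (hν_lift : ∀ a, p (ν a) = aug G a) (hμ : ∀ a : augIdeal G, i (μ a) = ν a)
    {x : G} (hx : TwistEquiv π ρ i p x) : ∃ φ, FiberMem π μ φ (π x) := by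
  obtain ⟨β, -, hβ_add, hβ_p, hβ_i, hβ_ρ⟩ := hx
  have h_mem : ∀ a, ∃ m : M, i m = β (ν (of ℤ G x⁻¹ * a)) - ν a := fun a =>
    (hex _).1 (by rw [map_sub, hβ_p, hν_lift, hν_lift, map_mul, aug_of, one_mul, sub_self])
  choose φ hφ using h_mem
  have hμN : ∀ n ∈ π.ker, augTwist n μ = μ := fun n hn =>
    augTwist_eq_self_of_restrict hi hρ_i hν_equiv hμ hn
  refine ⟨φ, FiberMem.of_lift hμN (fun a b => hi ?_) (fun n hn a => hi ?_) (fun a => hi ?_)⟩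
  · simp only [map_add, hφ, mul_add, hβ_add]
    abel
  · have hconj := π.normal_ker.conj_mem' n hn x
    have h_of : of ℤ G x⁻¹ * (of ℤ G n * a) = of ℤ G (x⁻¹ * n * x) * (of ℤ G x⁻¹ * a) := by
      simp only [← mul_assoc, ← map_mul, mul_inv_cancel_right]
    rw [← hρ_i n hn, hφ, hφ, h_of, hν_equiv _ hconj, hν_equiv n hn, hβ_ρ n hn]
    exact (map_sub (AddMonoidHom.mk' (ρ n) (hρ_add n hn)) _ _).symm
  · rw [hφ, map_sub, augTwist, ← hβ_i, hμ, hμ]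

end Extension

theorem fiber_product_extension_general {G Q M E : Type*} [Group G] [Group Q] [AddCommGroup M]
    [DistribMulAction G M] [AddCommGroup E]
    (π : G →* Q) (hπ : Function.Surjective π)
    (i : M →+ E) (p : E →+ ℤ)
    (hi : Function.Injective i)
    (hex : ∀ e : E, p e = 0 ↔ ∃ m : M, i m = e)
    (ρ : G → E → E)
    (hρ_add : ∀ n ∈ π.ker, ∀ e e' : E, ρ n (e + e') = ρ n e + ρ n e')
    (hρ_i : ∀ n ∈ π.ker, ∀ m : M, ρ n (i m) = i (n • m))
    (ν : MonoidAlgebra ℤ G →+ E)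
    (hν_equiv : ∀ n ∈ π.ker, ∀ a : MonoidAlgebra ℤ G,
      ν (MonoidAlgebra.of ℤ G n * a) = ρ n (ν a))
    (hν_lift : ∀ a : MonoidAlgebra ℤ G, p (ν a) = aug G a)
    (μ : augIdeal G → M)
    (hμ : ∀ a : augIdeal G, i (μ a) = ν ↑a)
    (hinv : ∀ x : G, TwistEquiv π ρ i p x) :
    -- closure under the semidirect multiplication
    (∀ (φ φ' : MonoidAlgebra ℤ G → M) (q q' : Q) (x : G),
      FiberMem π μ φ q → FiberMem π μ φ' q' → π x = q →
      FiberMem π μ (fun a => φ a + x • φ' (MonoidAlgebra.of ℤ G x⁻¹ * a)) (q * q'))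
    -- the identity (0, 1) belongs to it
    ∧ FiberMem π μ (fun _ => (0 : M)) (1 : Q)
    -- closure under inverses
    ∧ (∀ (φ : MonoidAlgebra ℤ G → M) (q : Q) (x : G),
        FiberMem π μ φ q → π x = q →
        FiberMem π μ (fun a => -(x⁻¹ • φ (MonoidAlgebra.of ℤ G x * a))) q⁻¹)
    -- the projection to Q is surjective
    ∧ (∀ q : Q, ∃ φ : MonoidAlgebra ℤ G → M, FiberMem π μ φ q)
    -- the kernel of the projection is Mᴺ
    ∧ (∀ φ : MonoidAlgebra ℤ G → M, FiberMem π μ φ (1 : Q) →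
        (∀ n ∈ π.ker, n • φ 1 = φ 1) ∧ ∀ a : MonoidAlgebra ℤ G, φ a = aug G a • φ 1)
    ∧ (∀ m : M, (∀ n ∈ π.ker, n • m = m) →
        FiberMem π μ (fun a => aug G a • m) (1 : Q)) := by
  have hμN : ∀ n ∈ π.ker, augTwist n μ = μ := fun n hn =>
    augTwist_eq_self_of_restrict hi hρ_i hν_equiv hμ hn
  refine ⟨fun φ φ' q q' x h h' hx => h.mul h' hx, ?_, fun φ q x h hx => h.inv hμN hx,
    fun q => ?_, fun φ h => ⟨fun n hn => h.smul_one_eq hn, h.eq_aug_smul⟩,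
    fun m hm => fiberMem_aug_smul hμN hm⟩
  · simpa using fiberMem_aug_smul hμN (m := 0) (by simp)
  · obtain ⟨x, rfl⟩ := hπ q
    exact exists_fiberMem_of_twistEquiv hi hex hρ_add hρ_i hν_equiv hν_lift hμ (hinv x)

/-- The set `Hom_N(ℤG, M) ⋊_T Q = {(φ, q) : φ|_{IG} = d(q)}` is a subgroup of the
semidirect product `Hom_N(ℤG, M) ⋊ Q` (closed under the multiplication
`(φ, q)(φ', q') = (φ + q • φ', qq')`, containing the identity `(0, 1)` and closed
under inverses), the projection to `Q` is surjective (using the `Q`-invariance of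
`[e_M]`), and its kernel is isomorphic to `Mᴺ` (it consists of the `(a ↦ ε a • m, 1)`
with `m ∈ Mᴺ`), so `0 → Mᴺ → Hom_N(ℤG, M) ⋊_T Q → Q → 1` is a group extension. -/
theorem fiber_product_extension {G Q M E : Type*} [Group G] [Group Q] [AddCommGroup M]
    [DistribMulAction G M] [AddCommGroup E]
    (π : G →* Q) (hπ : Function.Surjective π)
    (i : M →+ E) (p : E →+ ℤ)
    (hi : Function.Injective i) (hp : Function.Surjective p)
    (hex : ∀ e : E, p e = 0 ↔ ∃ m : M, i m = e)
    (ρ : G → E → E)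
    (hρ_add : ∀ n ∈ π.ker, ∀ e e' : E, ρ n (e + e') = ρ n e + ρ n e')
    (hρ_mul : ∀ n ∈ π.ker, ∀ n' ∈ π.ker, ∀ e : E, ρ (n * n') e = ρ n (ρ n' e))
    (hρ_one : ∀ e : E, ρ 1 e = e)
    (hρ_i : ∀ n ∈ π.ker, ∀ m : M, ρ n (i m) = i (n • m))
    (hρ_p : ∀ n ∈ π.ker, ∀ e : E, p (ρ n e) = p e)
    (ν : MonoidAlgebra ℤ G →+ E)
    (hν_equiv : ∀ n ∈ π.ker, ∀ a : MonoidAlgebra ℤ G,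
      ν (MonoidAlgebra.of ℤ G n * a) = ρ n (ν a))
    (hν_lift : ∀ a : MonoidAlgebra ℤ G, p (ν a) = aug G a)
    (μ : augIdeal G → M)
    (hμ : ∀ a : augIdeal G, i (μ a) = ν ↑a)
    (hinv : ∀ x : G, TwistEquiv π ρ i p x) :
    -- closure under the semidirect multiplication
    (∀ (φ φ' : MonoidAlgebra ℤ G → M) (q q' : Q) (x : G),
      FiberMem π μ φ q → FiberMem π μ φ' q' → π x = q →
      FiberMem π μ (fun a => φ a + x • φ' (MonoidAlgebra.of ℤ G x⁻¹ * a)) (q * q'))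
    -- the identity (0, 1) belongs to it
    ∧ FiberMem π μ (fun _ => (0 : M)) (1 : Q)
    -- closure under inverses
    ∧ (∀ (φ : MonoidAlgebra ℤ G → M) (q : Q) (x : G),
        FiberMem π μ φ q → π x = q →
        FiberMem π μ (fun a => -(x⁻¹ • φ (MonoidAlgebra.of ℤ G x * a))) q⁻¹)
    -- the projection to Q is surjective
    ∧ (∀ q : Q, ∃ φ : MonoidAlgebra ℤ G → M, FiberMem π μ φ q)
    -- the kernel of the projection is Mᴺ
    ∧ (∀ φ : MonoidAlgebra ℤ G → M, FiberMem π μ φ (1 : Q) →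
        (∀ n ∈ π.ker, n • φ 1 = φ 1) ∧ ∀ a : MonoidAlgebra ℤ G, φ a = aug G a • φ 1)
    ∧ (∀ m : M, (∀ n ∈ π.ker, n • m = m) →
        FiberMem π μ (fun a => aug G a • m) (1 : Q)) :=
  fiber_product_extension_general π hπ i p hi hex ρ hρ_add hρ_i ν hν_equiv hν_lift μ hμ hinv
end
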